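/- For α > 8/3, the map F_α(x) = −(3α/2)x(x−1)(x−2) has exactly two fixed points x₋(α) < 3/2 < x₊(α) in (1,2), with x₊ stable in the sense |F'_α(x₊)| < 1 for α sufficiently close to 8/3, and the distance x₊(α) − x₋(α) scales as the square root of (α − 8/3): precisely, (x₊(α) − x₋(α))² / (α − 8/3) tends to a positive finite limit as α → (8/3)⁺. -/

import Mathlib

open Filter

/-- The cubic coupling function with `δ = 0`. -/
noncomputable def g0 (x : ℝ) : ℝ := -(3 / 2) * x * (x - 1) * (x - 2)

/-!
Away from `x = 0`, the fixed-point equation `α g₀(x) = x` reduces to the quadratic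
`(x - 3/2)² = (α - 8/3) / (4α)`, so for `α ≥ 8/3` the fixed points are `3/2 ± r(α)` with
`r(α) = √((α - 8/3) / (4α))`. Hence `(x₊ - x₋)² / (α - 8/3) = 4 r(α)² / (α - 8/3) = 1/α → 3/8`,
and `F_α'(x₊) = 3 - 3α/4 - 9α r(α)/2`, which is `1` at `α = 8/3` and slightly below `1` just after.
-/

noncomputable def fixedPointRadius (α : ℝ) : ℝ := Real.sqrt ((α - 8 / 3) / (4 * α))

lemma mul_g0_eq_self_iff {α x : ℝ} (hα : α ≠ 0) (hx : x ≠ 0) :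
    α * g0 x = x ↔ (x - 3 / 2) ^ 2 = (α - 8 / 3) / (4 * α) := by
  rw [eq_div_iff (by positivity), g0]
  constructor <;> intro h
  · have := mul_left_cancel₀ hx
      (show x * (α * (x - 1) * (x - 2)) = x * (-2 / 3) by linear_combination (-2 / 3 : ℝ) * h)
    linear_combination 4 * this
  · linear_combination (-(3 / 8) * x) * h

lemma hasDerivAt_g0 (x : ℝ) : HasDerivAt g0 (-(3 / 2) * (3 * x ^ 2 - 6 * x + 2)) x := by
  have h := (((hasDerivAt_id' x).const_mul (-(3 / 2) : ℝ)).mul ((hasDerivAt_id' x).sub_const 1)).mul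
    ((hasDerivAt_id' x).sub_const 2)
  exact h.congr_deriv (by simp only [Pi.mul_apply]; ring)

section Radius

variable {α : ℝ}

lemma sq_fixedPointRadius (hα : 8 / 3 ≤ α) :
    fixedPointRadius α ^ 2 = (α - 8 / 3) / (4 * α) :=
  Real.sq_sqrt (div_nonneg (by linarith) (by linarith))

lemma fixedPointRadius_pos (hα : 8 / 3 < α) : 0 < fixedPointRadius α :=
  Real.sqrt_pos.2 (div_pos (by linarith) (by linarith))

lemma fixedPointRadius_lt_half (hα : 8 / 3 ≤ α) : fixedPointRadius α < 1 / 2 := by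
  have h : fixedPointRadius α ^ 2 < (1 / 2) ^ 2 := by
    rw [sq_fixedPointRadius hα, div_lt_iff₀ (by linarith)]
    linarith
  exact lt_of_pow_lt_pow_left₀ 2 (by norm_num) h

lemma mul_g0_eq_self_iff_eq_or_eq {x : ℝ} (hα : 8 / 3 ≤ α) (hx : x ≠ 0) :
    α * g0 x = x ↔ x = 3 / 2 - fixedPointRadius α ∨ x = 3 / 2 + fixedPointRadius α := by
  rw [mul_g0_eq_self_iff (by positivity) hx, ← sq_fixedPointRadius hα, sq_eq_sq_iff_eq_or_eq_neg]
  constructor <;> rintro (h | h) <;> [right; left; right; left] <;> linarith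

lemma sq_two_mul_fixedPointRadius_div (hα : 8 / 3 < α) :
    (2 * fixedPointRadius α) ^ 2 / (α - 8 / 3) = α⁻¹ := by
  rw [div_eq_iff (by linarith), mul_pow, sq_fixedPointRadius hα.le]
  field_simp
  ring

lemma deriv_mul_g0_three_halves_add_fixedPointRadius (hα : 8 / 3 ≤ α) :
    deriv (fun x => α * g0 x) (3 / 2 + fixedPointRadius α)
      = 3 - 3 * α / 4 - 9 * α * fixedPointRadius α / 2 := by
  rw [((hasDerivAt_g0 _).const_mul α).deriv]
  have h := sq_fixedPointRadius hα
  rw [eq_div_iff (by positivity)] at h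
  linear_combination (-(9 / 8) : ℝ) * h

end Radius

theorem two_fixed_points_and_sqrt_splitting :
    ∃ xm xp : ℝ → ℝ,
      -- for α > 8/3 there are exactly two fixed points x₋ < 3/2 < x₊ in (1,2)
      (∀ α : ℝ, 8 / 3 < α →
        xm α ∈ Set.Ioo (1 : ℝ) 2 ∧ xp α ∈ Set.Ioo (1 : ℝ) 2 ∧
        xm α < 3 / 2 ∧ 3 / 2 < xp α ∧
        α * g0 (xm α) = xm α ∧ α * g0 (xp α) = xp α ∧
        (∀ x ∈ Set.Ioo (1 : ℝ) 2, α * g0 x = x → x = xm α ∨ x = xp α)) ∧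
      -- x₊ is stable for α close enough to 8/3
      (∃ ε > (0 : ℝ), ∀ α : ℝ, 8 / 3 < α → α < 8 / 3 + ε →
        |deriv (fun x => α * g0 x) (xp α)| < 1) ∧
      -- square-root splitting: (x₊ − x₋)² / (α − 8/3) has a positive finite limit
      (∃ L > (0 : ℝ),
        Tendsto (fun α : ℝ => (xp α - xm α) ^ 2 / (α - 8 / 3))
          (nhdsWithin (8 / 3) (Set.Ioi (8 / 3))) (nhds L)) := by
  refine ⟨fun α => 3 / 2 - fixedPointRadius α, fun α => 3 / 2 + fixedPointRadius α,
    fun α hα => ?_, ⟨1 / 100, by norm_num, fun α hα hαε => ?_⟩, ⟨3 / 8, by norm_num, ?_⟩⟩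
  · have hr := fixedPointRadius_pos hα
    have hr_half := fixedPointRadius_lt_half hα.le
    refine ⟨⟨by linarith, by linarith⟩, ⟨by linarith, by linarith⟩, by linarith, by linarith,
      (mul_g0_eq_self_iff_eq_or_eq hα.le (by linarith)).2 (.inl rfl),
      (mul_g0_eq_self_iff_eq_or_eq hα.le (by linarith)).2 (.inr rfl),
      fun x hx hfix => (mul_g0_eq_self_iff_eq_or_eq hα.le (by linarith [hx.1])).1 hfix⟩
  · have hr := fixedPointRadius_pos hα
    have hsq := sq_fixedPointRadius hα.le
    rw [eq_div_iff (by positivity)] at hsq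
    have hr_small : fixedPointRadius α < 1 / 31 := by nlinarith
    rw [deriv_mul_g0_three_halves_add_fixedPointRadius hα.le, abs_lt]
    constructor <;> nlinarith
  · have hlim : Tendsto (fun α : ℝ => α⁻¹) (nhdsWithin (8 / 3) (Set.Ioi (8 / 3)))
        (nhds (3 / 8)) := by
      convert ((continuousAt_inv₀ (by norm_num : (8 / 3 : ℝ) ≠ 0)).tendsto).mono_left
        nhdsWithin_le_nhds using 2
      norm_num
    refine hlim.congr' (eventually_nhdsWithin_of_forall fun α (hα : 8 / 3 < α) => ?_)
    rw [← sq_two_mul_fixedPointRadius_div hα]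
    ring
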